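/- The unique Laurent series solution x ∈ ℚ((t⁻¹)) of degree ≥ 1 of the cubic equation 3x³ − 3tx² − 9x + t = 0 satisfies the Riccati differential equation (t² + 9)x' = 1 + x². -/

import Mathlib

open Polynomial

/-- The formal derivative (with respect to `X`) of a formal Laurent series. -/
noncomputable def lsDeriv {F : Type*} [Field F] (f : LaurentSeries F) : LaurentSeries F where
  coeff n := (n + 1 : ℤ) * f.coeff (n + 1)
  isPWO_support' := by
    refine ((HahnSeries.single (-1 : ℤ) (1 : F) * f).isPWO_support).mono ?_
    intro n hn
    have hf : f.coeff (n + 1) ≠ 0 := by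
      intro h
      apply hn
      simp [h]
    have hcoeff : (HahnSeries.single (-1 : ℤ) (1 : F) * f).coeff n = f.coeff (n + 1) := by
      have := HahnSeries.coeff_single_mul_add (r := (1 : F)) (x := f) (b := (-1 : ℤ)) (a := n + 1)
      simpa using this
    simp only [HahnSeries.mem_support, hcoeff]
    exact hf

/-- `t`, as an element of `ℚ((t⁻¹))`: the field of Laurent series in `X = t⁻¹`,
so `t = X⁻¹` is the Hahn series with a single coefficient `1` in degree `-1`. -/
noncomputable def lsT : LaurentSeries ℚ := HahnSeries.single (-1 : ℤ) 1

/-- The formal derivative with respect to `t` on `ℚ((t⁻¹))`: since `X = t⁻¹`,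
`d/dt = -X² · d/dX`. -/
noncomputable def tDeriv (f : LaurentSeries ℚ) : LaurentSeries ℚ :=
  -(HahnSeries.single (2 : ℤ) (1 : ℚ)) * lsDeriv f

/-!
Differentiating the cubic gives `(9x² - 6tx - 9) x' = 3x² - 1`, and combining this with the
cubic yields `(3x² - 1) ((t² + 9) x' - 1 - x²) = 0`. Modulo the cubic, `3x² - 1` is invertible
up to the factor `8`, so every root satisfies the Riccati equation, in any differential ring
with `t' = 1` in which `2` is a unit. On `ℚ((t⁻¹))` we have `d/dt = -X θ`, where `θ = X d/dX`
is the Euler derivation `∑ aₙ Xⁿ ↦ ∑ n aₙ Xⁿ`.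
-/

theorem Derivation.riccati_of_cubic {A : Type*} [CommRing A] (D : Derivation ℤ A A) {t x : A}
    (h2 : IsUnit (2 : A)) (ht : D t = 1) (hroot : 3 * x ^ 3 - 3 * t * x ^ 2 - 9 * x + t = 0) :
    (t ^ 2 + 9) * D x = 1 + x ^ 2 := by
  have hderiv : (9 * x ^ 2 - 6 * t * x - 9) * D x = 3 * x ^ 2 - 1 := by
    have h := congrArg D hroot
    have h3 : D 3 = 0 := by exact_mod_cast D.map_natCast 3
    have h9 : D 9 = 0 := by exact_mod_cast D.map_natCast 9
    simp only [map_add, map_sub, leibniz, leibniz_pow, ht, h3, h9, map_zero, smul_eq_mul,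
      nsmul_eq_mul] at h
    linear_combination h
  have hkey : (3 * x ^ 2 - 1) * ((t ^ 2 + 9) * D x - (1 + x ^ 2)) = 0 := by
    linear_combination (1 + x ^ 2) * hderiv - (3 * x + t) * D x * hroot
  -- Modulo the cubic, `8x = (3x² - 1)(x - t)`, hence `8 = (3x² - 1)(3x(x - t) - 8)`.
  have h8 : 2 ^ 3 * ((t ^ 2 + 9) * D x - (1 + x ^ 2)) = 0 := by
    linear_combination (3 * x * (x - t) - 8) * hkey
      - 3 * x * ((t ^ 2 + 9) * D x - (1 + x ^ 2)) * hroot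
  exact sub_eq_zero.mp ((h2.pow 3).mul_right_eq_zero.mp h8)

namespace LaurentSeries

variable {R : Type*} [CommRing R]

def eulerOp (f : LaurentSeries R) : LaurentSeries R where
  coeff n := n • f.coeff n
  isPWO_support' := f.isPWO_support.mono fun n hn h ↦ hn (by simp [h])

@[simp]
theorem coeff_eulerOp (f : LaurentSeries R) (n : ℤ) : (eulerOp f).coeff n = n • f.coeff n := rfl

theorem support_eulerOp_subset (f : LaurentSeries R) : (eulerOp f).support ⊆ f.support :=
  fun n hn h ↦ hn (by simp [h])

theorem eulerOp_mul (f g : LaurentSeries R) :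
    eulerOp (f * g) = f * eulerOp g + g * eulerOp f := by
  ext n
  rw [coeff_eulerOp, HahnSeries.coeff_add, HahnSeries.coeff_mul, mul_comm g,
    HahnSeries.coeff_mul_left' f.isPWO_support (support_eulerOp_subset f),
    HahnSeries.coeff_mul_right' g.isPWO_support (support_eulerOp_subset g),
    Finset.smul_sum, ← Finset.sum_add_distrib]
  refine Finset.sum_congr rfl fun ij hij ↦ ?_
  rw [← (Finset.mem_antidiagonal.mp hij).2.2, add_smul, coeff_eulerOp, coeff_eulerOp,
    smul_mul_assoc, mul_smul_comm, add_comm]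

theorem eulerOp_single (n : ℤ) (r : R) :
    eulerOp (HahnSeries.single n r) = HahnSeries.single n (n • r) := by
  ext m
  rcases eq_or_ne m n with rfl | h
  · simp
  · simp [HahnSeries.coeff_single_of_ne h]

end LaurentSeries

open LaurentSeries

theorem lsDeriv_eq_single_mul_eulerOp {F : Type*} [Field F] (f : LaurentSeries F) :
    lsDeriv f = HahnSeries.single (-1) 1 * eulerOp f := by
  ext n
  have := HahnSeries.coeff_single_mul_add (r := (1 : F)) (x := eulerOp f) (a := n + 1) (b := -1)
  simp only [add_neg_cancel_right, one_mul, coeff_eulerOp, zsmul_eq_mul] at this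
  rw [this]
  rfl

theorem tDeriv_eq_neg_single_mul_eulerOp (f : LaurentSeries ℚ) :
    tDeriv f = -(HahnSeries.single 1 1 * eulerOp f) := by
  rw [tDeriv, lsDeriv_eq_single_mul_eulerOp, neg_mul, ← mul_assoc, HahnSeries.single_mul_single]
  norm_num

theorem tDeriv_lsT : tDeriv lsT = 1 := by
  rw [tDeriv_eq_neg_single_mul_eulerOp, lsT, eulerOp_single, HahnSeries.single_mul_single]
  norm_num

section

-- `LaurentSeries R` is also a `ℤ`-algebra through `PowerSeries R`
-- (`HahnSeries.powerSeriesAlgebra`), whose scalar action is not definitionally `zsmul`.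
attribute [local instance] Ring.toIntAlgebra

noncomputable def LaurentSeries.eulerDerivation (R : Type*) [CommRing R] :
    Derivation ℤ (LaurentSeries R) (LaurentSeries R) :=
  Derivation.mk'
    { toFun := eulerOp
      map_add' f g := by ext; simp [smul_add]
      map_smul' c f := by
        ext n
        rw [RingHom.id_apply, HahnSeries.coeff_smul, coeff_eulerOp, coeff_eulerOp,
          HahnSeries.coeff_smul, smul_comm] }
    eulerOp_mul

noncomputable def tDerivation : Derivation ℤ (LaurentSeries ℚ) (LaurentSeries ℚ) :=
  -HahnSeries.single (1 : ℤ) (1 : ℚ) • eulerDerivation ℚ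

theorem tDerivation_apply (f : LaurentSeries ℚ) : tDerivation f = tDeriv f := by
  rw [tDeriv_eq_neg_single_mul_eulerOp, tDerivation, Derivation.smul_apply, smul_eq_mul, neg_mul]
  rfl

end

theorem riccati_of_cubic_no1_general (x : LaurentSeries ℚ)
    (hroot : 3 * x ^ 3 - 3 * lsT * x ^ 2 - 9 * x + lsT = 0) :
    (lsT ^ 2 + 9) * tDeriv x = 1 + x ^ 2 := by
  have h2 : IsUnit (2 : LaurentSeries ℚ) := by
    simpa using (IsUnit.mk0 (2 : ℚ) two_ne_zero).map (HahnSeries.C : ℚ →+* LaurentSeries ℚ)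
  have ht : tDerivation lsT = 1 := by rw [tDerivation_apply, tDeriv_lsT]
  rw [← tDerivation_apply]
  exact tDerivation.riccati_of_cubic h2 ht hroot

/-- The unique Laurent series solution `x ∈ ℚ((t⁻¹))` of degree ≥ 1 (i.e. `x.order ≤ -1`,
where the degree of a Laurent series is minus its order) of the cubic equation
`3x³ − 3tx² − 9x + t = 0` satisfies the Riccati differential equation
`(t² + 9)x' = 1 + x²`. -/
theorem riccati_of_cubic_no1 (x : LaurentSeries ℚ)
    (hroot : 3 * x ^ 3 - 3 * lsT * x ^ 2 - 9 * x + lsT = 0)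
    (hdeg : x.order ≤ -1) :
    (lsT ^ 2 + 9) * tDeriv x = 1 + x ^ 2 :=
  riccati_of_cubic_no1_general x hroot
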